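/- arXiv:2411.14533 — 6 statements merged into one kernel-verified Lean document; each statement's English description precedes it below -/
import Mathlib

section
/- If G is a connected bipartite graph with at least one edge, then the connected Grundy number of G equals 2. -/
open SimpleGraph

/-- First-fit coloring along a vertex sequence: each vertex in turn receives the
smallest positive integer not used on its already-colored neighbors. Uncolored
vertices have color `0`. -/
noncomputable def firstFit {V : Type*} [DecidableEq V] (G : SimpleGraph V) (l : List V) :
    V → ℕ :=
  l.foldl (fun c v => Function.update c v
    (sInf {k | 0 < k ∧ ∀ u, G.Adj v u → c u ≠ k})) (fun _ => 0)

/-- `l` is an ordering of all vertices. -/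
def IsOrdering {V : Type*} (l : List V) : Prop := l.Nodup ∧ ∀ v : V, v ∈ l

/-- `l` is a connected ordering: every vertex after the first has a neighbor earlier. -/
def IsConnectedOrdering {V : Type*} (G : SimpleGraph V) (l : List V) : Prop :=
  IsOrdering l ∧ ∀ i (hi : i < l.length), 0 < i → ∃ u ∈ l.take i, G.Adj u (l.get ⟨i, hi⟩)

/-- Number of colors used by first-fit along `l`. -/
noncomputable def numColors {V : Type*} [Fintype V] [DecidableEq V] (G : SimpleGraph V)
    (l : List V) : ℕ :=
  Finset.univ.sup (firstFit G l)

/-- The Grundy number: maximum number of first-fit colors over all vertex orderings. -/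
noncomputable def grundy {V : Type*} [Fintype V] [DecidableEq V] (G : SimpleGraph V) : ℕ :=
  sSup {k | ∃ l : List V, IsOrdering l ∧ k = numColors G l}

/-- The connected Grundy number: maximum number of first-fit colors over connected orderings. -/
noncomputable def connGrundy {V : Type*} [Fintype V] [DecidableEq V] (G : SimpleGraph V) : ℕ :=
  sSup {k | ∃ l : List V, IsConnectedOrdering G l ∧ k = numColors G l}

/-!
Fix a proper 2-colouring and let `a` be the first vertex of a connected ordering. First-fit gives
colour `1` to the class of `a` and colour `2` to the other class: a vertex of `a`'s class only has
neighbours coloured `2` (or not yet coloured), while a vertex of the other class has an earlier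
neighbour, coloured `1`, and no neighbour coloured `2`. An edge meets both classes, so every connected
ordering uses exactly two colours; listing the vertices by distance from a root gives a connected
ordering, since every other vertex has a neighbour closer to the root.
-/

section

variable {V : Type*} {G : SimpleGraph V}

lemma sInf_firstFree_eq_one {c : V → ℕ} {v : V} (h : ∀ u, G.Adj v u → c u ≠ 1) :
    sInf {k | 0 < k ∧ ∀ u, G.Adj v u → c u ≠ k} = 1 := by
  have hone : 1 ∈ {k | 0 < k ∧ ∀ u, G.Adj v u → c u ≠ k} := ⟨one_pos, h⟩
  have := (Nat.sInf_mem ⟨1, hone⟩).1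
  have := Nat.sInf_le hone
  omega

lemma sInf_firstFree_eq_two {c : V → ℕ} {v : V} (h₁ : ∃ u, G.Adj v u ∧ c u = 1)
    (h₂ : ∀ u, G.Adj v u → c u ≠ 2) :
    sInf {k | 0 < k ∧ ∀ u, G.Adj v u → c u ≠ k} = 2 := by
  obtain ⟨w, hvw, hw⟩ := h₁
  have htwo : 2 ∈ {k | 0 < k ∧ ∀ u, G.Adj v u → c u ≠ k} := ⟨two_pos, h₂⟩
  obtain ⟨hpos, hfree⟩ := Nat.sInf_mem ⟨2, htwo⟩
  have := Nat.sInf_le htwo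
  have := hfree w hvw
  omega

section FirstFit

variable [DecidableEq V]

lemma firstFit_append_singleton (l : List V) (v : V) :
    firstFit G (l ++ [v]) = Function.update (firstFit G l) v
      (sInf {k | 0 < k ∧ ∀ u, G.Adj v u → firstFit G l u ≠ k}) := by
  simp [firstFit, List.foldl_append]

theorem firstFit_eq_of_coloring (C : G.Coloring (Fin 2)) (b : Fin 2) (l : List V)
    (hl : ∀ p v, p ++ [v] <+: l → C v ≠ b → ∃ u ∈ p, G.Adj u v) (w : V) :
    firstFit G l w = if w ∈ l then (if C w = b then 1 else 2) else 0 := by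
  induction l using List.reverseRecOn generalizing w with
  | nil => simp [firstFit]
  | append_singleton q v ih =>
    have ih' := fun x ↦ ih (fun p x hp ↦ hl p x (hp.trans (List.prefix_append q [v]))) x
    have hcolor : sInf {k | 0 < k ∧ ∀ u, G.Adj v u → firstFit G q u ≠ k} =
        if C v = b then 1 else 2 := by
      split_ifs with hvb
      · refine sInf_firstFree_eq_one fun u hvu ↦ ?_
        have := C.valid hvu
        rw [ih']
        split_ifs <;> omega
      · obtain ⟨x, hxq, hxv⟩ := hl q v List.prefix_rfl hvb
        refine sInf_firstFree_eq_two ⟨x, hxv.symm, ?_⟩ fun u hvu ↦ ?_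
        · have := C.valid hxv
          rw [ih']
          simp only [hxq, if_true]
          split_ifs <;> omega
        · have := C.valid hvu
          rw [ih']
          split_ifs <;> omega
    rw [firstFit_append_singleton, hcolor]
    rcases eq_or_ne w v with rfl | hwv
    · simp
    · simp [ih', hwv]

end FirstFit

lemma IsConnectedOrdering.exists_adj_of_prefix {l p : List V} {v : V}
    (hl : IsConnectedOrdering G l) (hp : p ++ [v] <+: l) (hpne : p ≠ []) :
    ∃ u ∈ p, G.Adj u v := by
  obtain ⟨t, rfl⟩ := hp
  have hlen : p.length < (p ++ [v] ++ t).length := by simp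
  simpa [List.take_append_of_le_length] using
    hl.2 p.length hlen (List.length_pos_iff.mpr hpne)

theorem numColors_eq_two_of_isConnectedOrdering [Fintype V] [DecidableEq V]
    (hb : G.Colorable 2) (he : ∃ u v : V, G.Adj u v) {l : List V}
    (hl : IsConnectedOrdering G l) : numColors G l = 2 := by
  obtain ⟨C⟩ := hb
  obtain ⟨x, y, hxy⟩ := he
  obtain ⟨a, t, rfl⟩ := List.exists_cons_of_ne_nil (List.ne_nil_of_mem (hl.1.2 x))
  have hff := firstFit_eq_of_coloring C (C a) (a :: t) fun p v hp hvb ↦ by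
    refine hl.exists_adj_of_prefix hp ?_
    rintro rfl
    exact hvb (congrArg C (by simpa using hp))
  obtain ⟨z, hz⟩ : ∃ z, C z ≠ C a := by
    by_cases hxa : C x = C a
    · exact ⟨y, hxa ▸ (C.valid hxy).symm⟩
    · exact ⟨x, hxa⟩
  refine le_antisymm (Finset.sup_le fun w _ ↦ ?_) ?_
  · rw [hff]
    split_ifs <;> omega
  · calc 2 = firstFit G (a :: t) z := by simp [hff, hl.1.2 z, hz]
      _ ≤ numColors G (a :: t) := Finset.le_sup (Finset.mem_univ z)

lemma List.Pairwise.lt_of_comp_getElem_lt {α β : Type*} [Preorder β] {f : α → β} {l : List α}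
    (hl : l.Pairwise (fun a b ↦ f a ≤ f b)) {i j : ℕ} (hi : i < l.length) (hj : j < l.length)
    (hlt : f l[j] < f l[i]) : j < i := by
  by_contra! hij
  rcases hij.eq_or_lt with rfl | hij
  · exact hlt.false
  · exact (List.pairwise_iff_getElem.mp hl i j hi hj hij).not_gt hlt

lemma SimpleGraph.Reachable.exists_adj_dist_lt {r v : V} (hr : G.Reachable r v) (hne : v ≠ r) :
    ∃ u, G.Adj u v ∧ G.dist r u < G.dist r v := by
  obtain ⟨p, hp⟩ := hr.symm.exists_walk_length_eq_dist
  obtain ⟨u, hvu, q, rfl⟩ := p.exists_eq_cons_of_ne hne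
  have := G.dist_le q
  rw [Walk.length_cons] at hp
  refine ⟨u, hvu.symm, ?_⟩
  rw [G.dist_comm, G.dist_comm (u := r)]
  omega

theorem SimpleGraph.Connected.exists_isConnectedOrdering [Fintype V] (hc : G.Connected) :
    ∃ l : List V, IsConnectedOrdering G l := by
  obtain ⟨r⟩ := hc.nonempty
  set l := (Finset.univ : Finset V).toList.mergeSort (fun a b ↦ decide (G.dist r a ≤ G.dist r b))
  have hperm : l.Perm Finset.univ.toList := List.mergeSort_perm _ _
  have hmem (v : V) : v ∈ l := hperm.mem_iff.mpr (by simp)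
  have hsorted : l.Pairwise (fun a b ↦ G.dist r a ≤ G.dist r b) := by
    simpa using List.pairwise_mergeSort (le := fun a b ↦ decide (G.dist r a ≤ G.dist r b))
      (by simpa using fun _ _ _ ↦ le_trans) (by simpa using fun a b ↦ le_total _ _) _
  have hnd : l.Nodup := hperm.nodup_iff.mpr (Finset.nodup_toList _)
  refine ⟨l, ⟨hnd, hmem⟩, fun i hi hi0 ↦ ?_⟩
  have hne : l[i] ≠ r := by
    intro hir
    have h0 : l[0] ≠ r := fun h0r ↦ hi0.ne (hnd.getElem_inj_iff.mp (h0r.trans hir.symm))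
    have hpos : 0 < G.dist r l[0] :=
      Nat.pos_of_ne_zero (dist_ne_zero_iff_ne_and_reachable.mpr ⟨h0.symm, hc.preconnected _ _⟩)
    have : i < 0 := hsorted.lt_of_comp_getElem_lt (by omega) hi (by simpa [hir] using hpos)
    omega
  obtain ⟨u, hu, hlt⟩ := (hc.preconnected r l[i]).exists_adj_dist_lt hne
  obtain ⟨j, hj, rfl⟩ := List.getElem_of_mem (hmem u)
  have hji := hsorted.lt_of_comp_getElem_lt hi hj hlt
  exact ⟨l[j], List.mem_take_iff_getElem.mpr ⟨j, by omega, rfl⟩, hu⟩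

end

theorem stmt1 {V : Type*} [Fintype V] [DecidableEq V] (G : SimpleGraph V)
    (hc : G.Connected) (hb : G.Colorable 2) (he : ∃ u v : V, G.Adj u v) :
    connGrundy G = 2 := by
  obtain ⟨l₀, hl₀⟩ := hc.exists_isConnectedOrdering
  have hcolors : {k | ∃ l : List V, IsConnectedOrdering G l ∧ k = numColors G l} = {2} := by
    ext k
    constructor
    · rintro ⟨l, hl, rfl⟩
      exact numColors_eq_two_of_isConnectedOrdering hb he hl
    · rintro rfl
      exact ⟨l₀, hl₀, (numColors_eq_two_of_isConnectedOrdering hb he hl₀).symm⟩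
  rw [connGrundy, hcolors, csSup_singleton]
end

section
/- Let S be a vertex ordering of a graph, v a vertex, and S' obtained from S by moving v to an earlier position (p_{S'}(v) < p_S(v)) while keeping the relative order of all other vertices. If v receives the same color in the first-fit colorings along S and S', then every vertex receives the same color in the first-fit colorings along S and S'. -/
open SimpleGraph

/-!
Write `S = P₁ ++ P₂ ++ v :: Q`, so that `S' = P₁ ++ v :: (P₂ ++ Q)`, and let `k` be the color of `v`
along `S`. Along `S'` the vertices of `P₂` are colored with `v` already colored `k`; this
precoloring changes nothing as long as no neighbor `w` of `v` in `P₂` would otherwise take `k`,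
and indeed `w` does not: along `S` it is colored before `v`, and `k` avoids the colors of those
neighbors. So if `v` also gets `k` along `S'`, both runs reach the same coloring after `P₂` and
agree from then on.
-/

namespace List

theorem insertIdx_eq_take_append_drop {α : Type*} (a : α) :
    ∀ (l : List α) (i : ℕ), i ≤ l.length → l.insertIdx i a = l.take i ++ a :: l.drop i
  | l, 0, _ => by simp
  | [], _ + 1, h => by simp at h
  | b :: l, i + 1, h => by
    simp [insertIdx_succ_cons, insertIdx_eq_take_append_drop a l i (by simpa using h)]

theorem insertIdx_append_of_le_length {α : Type*} (a : α) {l₁ : List α} (l₂ : List α) {i : ℕ}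
    (h : i ≤ l₁.length) :
    (l₁ ++ l₂).insertIdx i a = l₁.take i ++ a :: (l₁.drop i ++ l₂) := by
  rw [insertIdx_eq_take_append_drop a _ i (by simp; omega), take_append_of_le_length h,
    drop_append_of_le_length h]

end List

section FirstFit

variable {V : Type*} (G : SimpleGraph V)

noncomputable def firstFitColor (c : V → ℕ) (v : V) : ℕ :=
  sInf {k | 0 < k ∧ ∀ u, G.Adj v u → c u ≠ k}

variable {G}

theorem firstFitColor_le {c : V → ℕ} {v : V} {k : ℕ} (hk : 0 < k)
    (hadj : ∀ u, G.Adj v u → c u ≠ k) : firstFitColor G c v ≤ k :=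
  Nat.sInf_le ⟨hk, hadj⟩

theorem firstFitColor_spec [Finite V] (c : V → ℕ) (v : V) :
    0 < firstFitColor G c v ∧ ∀ u, G.Adj v u → c u ≠ firstFitColor G c v := by
  have hne : (Set.Ioi 0 \ Set.range c).Nonempty :=
    ((Set.Ioi_infinite 0).sdiff (Set.finite_range c)).nonempty
  obtain ⟨k, hk, hkc⟩ := hne
  exact Nat.sInf_mem (s := {k | 0 < k ∧ ∀ u, G.Adj v u → c u ≠ k})
    ⟨k, hk, fun u _ hu => hkc ⟨u, hu⟩⟩

variable (G) [DecidableEq V]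

noncomputable def firstFitStep (c : V → ℕ) (v : V) : V → ℕ :=
  Function.update c v (firstFitColor G c v)

theorem firstFit_eq_foldl (l : List V) :
    firstFit G l = l.foldl (firstFitStep G) (fun _ => 0) := rfl

variable {G}

theorem foldl_firstFitStep_of_notMem (c : V → ℕ) {l : List V} {u : V} (hu : u ∉ l) :
    l.foldl (firstFitStep G) c u = c u := by
  induction l generalizing c with
  | nil => rfl
  | cons w l ih =>
    simp only [List.mem_cons, not_or] at hu
    rw [List.foldl_cons, ih _ hu.2, firstFitStep, Function.update_of_ne hu.1]

theorem firstFit_of_notMem {l : List V} {v : V} (hv : v ∉ l) : firstFit G l v = 0 :=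
  foldl_firstFitStep_of_notMem _ hv

theorem firstFit_append_cons (L Q : List V) (v : V) :
    firstFit G (L ++ v :: Q) = Q.foldl (firstFitStep G) (firstFitStep G (firstFit G L) v) := by
  rw [firstFit_eq_foldl, List.foldl_append, List.foldl_cons, firstFit_eq_foldl]

theorem firstFit_append_cons_self (L : List V) {Q : List V} {v : V} (hv : v ∉ Q) :
    firstFit G (L ++ v :: Q) v = firstFitColor G (firstFit G L) v := by
  rw [firstFit_append_cons, foldl_firstFitStep_of_notMem _ hv, firstFitStep,
    Function.update_self]

/-- Colors are positive, so the uncolored `v` blocks nothing before the update. -/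
theorem firstFitColor_update [Finite V] {c : V → ℕ} {v w : V} {k : ℕ} (hcv : c v = 0)
    (hk : G.Adj w v → firstFitColor G c w ≠ k) :
    firstFitColor G (Function.update c v k) w = firstFitColor G c w := by
  obtain ⟨hpos, hadj⟩ := firstFitColor_spec (G := G) c w
  obtain ⟨hpos', hadj'⟩ := firstFitColor_spec (G := G) (Function.update c v k) w
  apply le_antisymm
  · refine firstFitColor_le hpos fun u hu => ?_
    rcases eq_or_ne u v with rfl | huv
    · rw [Function.update_self]
      exact (hk hu).symm
    · rw [Function.update_of_ne huv]
      exact hadj u hu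
  · refine firstFitColor_le hpos' fun u hu => ?_
    rcases eq_or_ne u v with rfl | huv
    · rw [hcv]
      exact hpos'.ne
    · simpa [Function.update_of_ne huv] using hadj' u hu

theorem foldl_firstFitStep_update [Finite V] {c : V → ℕ} {v : V} {k : ℕ} (hcv : c v = 0)
    {l : List V} (hv : v ∉ l) (hl : l.Nodup)
    (hk : ∀ w ∈ l, G.Adj v w → l.foldl (firstFitStep G) c w ≠ k) :
    l.foldl (firstFitStep G) (Function.update c v k) =
      Function.update (l.foldl (firstFitStep G) c) v k := by
  induction l generalizing c with
  | nil => rfl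
  | cons w l ih =>
    simp only [List.mem_cons, not_or] at hv
    obtain ⟨hwl, hl⟩ := List.nodup_cons.mp hl
    have hwv : w ≠ v := Ne.symm hv.1
    have hstep : firstFitStep G (Function.update c v k) w =
        Function.update (firstFitStep G c w) v k := by
      rw [firstFitStep, firstFitStep, Function.update_comm hwv, firstFitColor_update hcv]
      intro hadj
      simpa [foldl_firstFitStep_of_notMem _ hwl, firstFitStep] using
        hk w List.mem_cons_self hadj.symm
    rw [List.foldl_cons, List.foldl_cons, hstep]
    refine ih ?_ hv.2 hl fun u hu hadj => hk u (List.mem_cons_of_mem w hu) hadj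
    rw [firstFitStep, Function.update_of_ne hwv.symm, hcv]

theorem firstFit_move_eq_of_color_eq [Finite V] {P₁ P₂ Q : List V} {v : V}
    (hnd : (P₁ ++ P₂ ++ v :: Q).Nodup)
    (hcol : firstFit G (P₁ ++ P₂ ++ v :: Q) v = firstFit G (P₁ ++ v :: (P₂ ++ Q)) v) :
    firstFit G (P₁ ++ P₂ ++ v :: Q) = firstFit G (P₁ ++ v :: (P₂ ++ Q)) := by
  have hv : v ∉ P₁ ∧ v ∉ P₂ ∧ v ∉ Q := by
    simp only [List.nodup_append, List.nodup_cons] at hnd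
    refine ⟨fun h => ?_, fun h => ?_, hnd.2.1.1⟩
    · exact hnd.2.2 v (List.mem_append_left _ h) v List.mem_cons_self rfl
    · exact hnd.2.2 v (List.mem_append_right _ h) v List.mem_cons_self rfl
  have hP₂ : P₂.Nodup := (List.nodup_append.mp (List.nodup_append.mp hnd).1).2.1
  have hc : P₂.foldl (firstFitStep G) (firstFit G P₁) = firstFit G (P₁ ++ P₂) := by
    rw [firstFit_eq_foldl G (P₁ ++ P₂), List.foldl_append, firstFit_eq_foldl]
  have hk : firstFitColor G (firstFit G P₁) v = firstFitColor G (firstFit G (P₁ ++ P₂)) v := by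
    rwa [firstFit_append_cons_self _ hv.2.2, firstFit_append_cons_self _
      (by simp [hv.2.1, hv.2.2]), eq_comm] at hcol
  have hP₂step : P₂.foldl (firstFitStep G) (firstFitStep G (firstFit G P₁) v) =
      firstFitStep G (firstFit G (P₁ ++ P₂)) v := by
    rw [firstFitStep, hk, foldl_firstFitStep_update (firstFit_of_notMem hv.1)
      hv.2.1 hP₂, hc, firstFitStep]
    intro w _ hadj
    rw [hc]
    exact (firstFitColor_spec (G := G) _ v).2 w hadj
  rw [firstFit_append_cons, firstFit_append_cons, List.foldl_append, hP₂step]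

end FirstFit

theorem stmt7 {V : Type*} [DecidableEq V] (G : SimpleGraph V) (S : List V)
    (hS : IsOrdering S) (v : V) (p' : ℕ)
    (S' : List V) (hS' : S' = (S.erase v).insertIdx p' v)
    (hmove : p' < S.idxOf v)
    (hcol : firstFit G S v = firstFit G S' v) :
    firstFit G S = firstFit G S' := by
  obtain ⟨hnd, hmem⟩ := hS
  have : Finite V := Set.finite_univ_iff.mp (S.finite_toSet.subset fun u _ => hmem u)
  obtain ⟨P, Q, rfl⟩ := List.append_of_mem (hmem v)
  have hvP : v ∉ P := fun h => (List.nodup_append.mp hnd).2.2 v h v List.mem_cons_self rfl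
  have hidx : (P ++ v :: Q).idxOf v = P.length := by
    rw [List.idxOf_append_of_notMem hvP, List.idxOf_cons_self, add_zero]
  have hS'eq : S' = P.take p' ++ v :: (P.drop p' ++ Q) := by
    rw [hS', List.erase_append_right _ hvP, List.erase_cons_head,
      List.insertIdx_append_of_le_length v Q (by omega)]
  have hsplit : P ++ v :: Q = P.take p' ++ P.drop p' ++ v :: Q := by rw [List.take_append_drop]
  rw [hS'eq, hsplit] at hcol ⊢
  rw [hsplit] at hnd
  exact firstFit_move_eq_of_color_eq hnd hcol
end

section
/- Let v be a vertex of a graph and let z, w be neighbors of v. Suppose S' and S'' are two vertex orderings that induce the same relative order on V \ {v}, and in both orderings v is placed strictly between z and w with no other neighbor of v positioned between z and w. Then the first-fit colorings along S' and S'' are identical. -/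
open SimpleGraph

/-
First-fit gives a vertex the least positive colour missing among its earlier neighbours, so
by induction along the ordering the colouring depends only on the acyclic orientation of `G`
that the ordering induces, i.e. on which end of each edge comes first. Orderings that agree
off `v` induce the same orientation on edges avoiding `v`. For a neighbour `u` of `v`, since
no neighbour of `v` lies strictly between `z` and `w`, `u` precedes `v` exactly when `u` comes
no later than `z`, and that is decided by the common order on `V \ {v}`.
-/

section FirstFit

variable {V : Type*} [DecidableEq V] (G : SimpleGraph V)

lemma firstFit_concat (l : List V) (x : V) :
    firstFit G (l ++ [x]) = Function.update (firstFit G l) x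
      (sInf {k | 0 < k ∧ ∀ u, G.Adj x u → firstFit G l u ≠ k}) :=
  List.foldl_concat _ _ _ _

lemma firstFit_append_of_not_mem (l₁ : List V) {l₂ : List V} {x : V} (hx : x ∉ l₂) :
    firstFit G (l₁ ++ l₂) x = firstFit G l₁ x := by
  induction l₂ generalizing l₁ with
  | nil => rw [List.append_nil]
  | cons a l₂ ih =>
    rw [List.mem_cons, not_or] at hx
    rw [← List.singleton_append, ← List.append_assoc, ih _ hx.2, firstFit_concat,
      Function.update_of_ne hx.1]

lemma firstFit_of_not_mem {l : List V} {x : V} (hx : x ∉ l) : firstFit G l x = 0 :=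
  firstFit_append_of_not_mem G [] hx

lemma firstFit_take {l : List V} (hl : l.Nodup) (n : ℕ) (u : V) :
    firstFit G (l.take n) u = if l.idxOf u < n then firstFit G l u else 0 := by
  by_cases hu : u ∈ l
  · split_ifs with h <;> rw [← List.mem_take_iff_idxOf_lt hu] at h
    · conv_rhs => rw [← List.take_append_drop n l]
      exact (firstFit_append_of_not_mem G _ (List.disjoint_take_drop hl le_rfl h)).symm
    · exact firstFit_of_not_mem G h
  · rw [firstFit_of_not_mem G hu, firstFit_of_not_mem G fun h => hu (List.mem_of_mem_take h),
      ite_self]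

lemma firstFit_eq_sInf {l : List V} (hl : l.Nodup) {x : V} (hx : x ∈ l) :
    firstFit G l x = sInf {k | 0 < k ∧ ∀ u, G.Adj x u →
      l.idxOf u < l.idxOf x → firstFit G l u ≠ k} := by
  set i := l.idxOf x
  have hi : i < l.length := List.idxOf_lt_length_iff.2 hx
  have hsplit : l = l.take i ++ [x] ++ l.drop (i + 1) := by
    rw [List.append_assoc, List.singleton_append, ← List.getElem_idxOf hi,
      ← List.drop_eq_getElem_cons hi, List.take_append_drop]
  have hx_drop : x ∉ l.drop (i + 1) :=
    List.disjoint_take_drop hl le_rfl ((List.mem_take_iff_idxOf_lt hx).2 (Nat.lt_succ_self i))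
  calc firstFit G l x = firstFit G (l.take i ++ [x]) x := by
        conv_lhs => rw [hsplit]
        exact firstFit_append_of_not_mem G _ hx_drop
    _ = sInf {k | 0 < k ∧ ∀ u, G.Adj x u → firstFit G (l.take i) u ≠ k} := by
        rw [firstFit_concat, Function.update_self]
    _ = _ := by
        congr 1
        ext k
        simp only [Set.mem_ofPred_eq, firstFit_take G hl]
        refine and_congr_right fun hk => forall₂_congr fun u _ => ?_
        split_ifs with h <;> simp [h, hk.ne]

theorem firstFit_eq_of_forall_adj_idxOf_lt_iff {l₁ l₂ : List V} (h₁ : IsOrdering l₁)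
    (h₂ : IsOrdering l₂)
    (h : ∀ x u, G.Adj x u → (l₁.idxOf u < l₁.idxOf x ↔ l₂.idxOf u < l₂.idxOf x)) :
    firstFit G l₁ = firstFit G l₂ := by
  funext x
  induction x using (measure l₁.idxOf).wf.induction with
  | h x ih =>
    rw [firstFit_eq_sInf G h₁.1 (h₁.2 x), firstFit_eq_sInf G h₂.1 (h₂.2 x)]
    congr 1
    ext k
    refine and_congr_right fun _ => forall₂_congr fun u hxu => ?_
    rw [← h x u hxu]
    exact imp_congr_right fun hu => by rw [ih u hu]

end FirstFit

lemma List.idxOf_lt_idxOf_iff_not_lt {α : Type*} [DecidableEq α] {l : List α} {a b : α}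
    (ha : a ∈ l) (hab : a ≠ b) : l.idxOf a < l.idxOf b ↔ ¬ l.idxOf b < l.idxOf a := by
  have : l.idxOf a ≠ l.idxOf b := fun h => hab ((List.idxOf_inj ha).1 h)
  omega

lemma idxOf_lt_idxOf_iff_le_of_no_adj_between {V : Type*} [DecidableEq V] {G : SimpleGraph V}
    {l : List V} {v z w u : V}
    (hbetween : l.idxOf z < l.idxOf v ∧ l.idxOf v < l.idxOf w)
    (hno : ∀ u, G.Adj v u → ¬(l.idxOf z < l.idxOf u ∧ l.idxOf u < l.idxOf w))
    (hu : G.Adj v u) :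
    l.idxOf u < l.idxOf v ↔ l.idxOf u ≤ l.idxOf z :=
  ⟨fun huv => not_lt.1 fun hzu => hno u hu ⟨hzu, huv.trans hbetween.2⟩,
    fun huz => huz.trans_lt hbetween.1⟩

theorem stmt9_general {V : Type*} [DecidableEq V] (G : SimpleGraph V) (v z w : V)
    (hz : G.Adj v z)
    (S' S'' : List V) (h1 : IsOrdering S') (h2 : IsOrdering S'')
    (hstable : ∀ a b : V, a ≠ v → b ≠ v →
      (S'.idxOf a < S'.idxOf b ↔ S''.idxOf a < S''.idxOf b))
    (hbetween' : S'.idxOf z < S'.idxOf v ∧ S'.idxOf v < S'.idxOf w)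
    (hbetween'' : S''.idxOf z < S''.idxOf v ∧ S''.idxOf v < S''.idxOf w)
    (hno' : ∀ u, G.Adj v u → ¬(S'.idxOf z < S'.idxOf u ∧ S'.idxOf u < S'.idxOf w))
    (hno'' : ∀ u, G.Adj v u → ¬(S''.idxOf z < S''.idxOf u ∧ S''.idxOf u < S''.idxOf w)) :
    firstFit G S' = firstFit G S'' := by
  have hv : ∀ u, G.Adj v u → (S'.idxOf u < S'.idxOf v ↔ S''.idxOf u < S''.idxOf v) := by
    intro u hu
    rw [idxOf_lt_idxOf_iff_le_of_no_adj_between hbetween' hno' hu,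
      idxOf_lt_idxOf_iff_le_of_no_adj_between hbetween'' hno'' hu, ← not_lt, ← not_lt,
      hstable z u hz.ne' hu.ne']
  refine firstFit_eq_of_forall_adj_idxOf_lt_iff G h1 h2 fun x u hxu => ?_
  by_cases hx : x = v
  · subst hx
    exact hv u hxu
  by_cases hu : u = v
  · subst hu
    rw [List.idxOf_lt_idxOf_iff_not_lt (h1.2 u) hxu.ne',
      List.idxOf_lt_idxOf_iff_not_lt (h2.2 u) hxu.ne', hv x hxu.symm]
  exact hstable u x hu hx

theorem stmt9 {V : Type*} [DecidableEq V] (G : SimpleGraph V) (v z w : V)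
    (hz : G.Adj v z) (hw : G.Adj v w)
    (S' S'' : List V) (h1 : IsOrdering S') (h2 : IsOrdering S'')
    (hstable : ∀ a b : V, a ≠ v → b ≠ v →
      (S'.idxOf a < S'.idxOf b ↔ S''.idxOf a < S''.idxOf b))
    (hbetween' : S'.idxOf z < S'.idxOf v ∧ S'.idxOf v < S'.idxOf w)
    (hbetween'' : S''.idxOf z < S''.idxOf v ∧ S''.idxOf v < S''.idxOf w)
    (hno' : ∀ u, G.Adj v u → ¬(S'.idxOf z < S'.idxOf u ∧ S'.idxOf u < S'.idxOf w))
    (hno'' : ∀ u, G.Adj v u → ¬(S''.idxOf z < S''.idxOf u ∧ S''.idxOf u < S''.idxOf w)) :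
    firstFit G S' = firstFit G S'' :=
  stmt9_general G v z w hz S' S'' h1 h2 hstable hbetween' hbetween'' hno' hno''
end

section
/- Let S be a connected vertex ordering of a connected graph G, and let u, v be adjacent vertices with p_S(u) < p_S(v). If either p_S(u) = 1 or v has some neighbor at a position strictly less than p_S(u), then the ordering obtained by moving v to position p_S(u) (shifting the intermediate vertices one position later) is again a connected ordering. -/
open SimpleGraph

/-!
Moving `v` forward to position `p_S(u)` shifts exactly the vertices at positions
`p_S(u), …, p_S(v) - 1` one step later and keeps the relative order of all vertices other
than `v`. Hence a vertex other than `u` and `v` keeps an earlier neighbour (if that neighbour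
was `v`, it has only moved further ahead); `u`, if it was first, now follows its neighbour `v`;
and `v` itself is preceded by the neighbour `w` of the hypothesis.
-/

namespace List

variable {α : Type*} [DecidableEq α]

theorem idxOf_erase_of_ne {a b : α} (hab : a ≠ b) :
    ∀ l : List α,
      (l.erase b).idxOf a = if l.idxOf b < l.idxOf a then l.idxOf a - 1 else l.idxOf a
  | [] => by simp
  | c :: l => by
    by_cases hcb : c = b
    · subst hcb
      simp [idxOf_cons_ne _ (Ne.symm hab)]
    · by_cases hca : c = a
      · subst hca
        simp [hcb]
      · rw [erase_cons_tail (by simpa using hcb), idxOf_cons_ne _ hca, idxOf_cons_ne _ hca,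
          idxOf_cons_ne _ hcb, idxOf_erase_of_ne hab l]
        split_ifs <;> omega

theorem idxOf_insertIdx_of_ne {a b : α} (hab : a ≠ b) :
    ∀ (l : List α) (k : ℕ), k ≤ l.length →
      (l.insertIdx k b).idxOf a = if k ≤ l.idxOf a then l.idxOf a + 1 else l.idxOf a
  | l, 0, _ => by simp [idxOf_cons_ne _ (Ne.symm hab)]
  | [], k + 1, h => by simp at h
  | c :: l, k + 1, h => by
    rw [insertIdx_succ_cons]
    by_cases hca : c = a
    · subst hca
      simp
    · rw [idxOf_cons_ne _ hca, idxOf_cons_ne _ hca,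
        idxOf_insertIdx_of_ne hab l k (by simpa using h)]
      split_ifs <;> omega

theorem idxOf_insertIdx_self {b : α} :
    ∀ {l : List α} {k : ℕ}, b ∉ l → k ≤ l.length → (l.insertIdx k b).idxOf b = k
  | l, 0, _, _ => by simp
  | [], k + 1, _, h => by simp at h
  | c :: l, k + 1, hb, h => by
    rw [mem_cons, not_or] at hb
    rw [insertIdx_succ_cons, idxOf_cons_ne _ (Ne.symm hb.1),
      idxOf_insertIdx_self hb.2 (by simpa using h)]

variable {l : List α} {a b : α} {k : ℕ}

theorem le_length_erase_of_le_idxOf (hb : b ∈ l) (hk : k ≤ l.idxOf b) :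
    k ≤ (l.erase b).length := by
  rw [length_erase_of_mem hb]
  have := idxOf_lt_length_iff.2 hb
  omega

theorem idxOf_insertIdx_erase_self (hl : l.Nodup) (hb : b ∈ l) (hk : k ≤ l.idxOf b) :
    ((l.erase b).insertIdx k b).idxOf b = k :=
  idxOf_insertIdx_self hl.not_mem_erase (le_length_erase_of_le_idxOf hb hk)

theorem idxOf_insertIdx_erase_of_ne (hab : a ≠ b) (hb : b ∈ l) (hk : k ≤ l.idxOf b) :
    ((l.erase b).insertIdx k b).idxOf a =
      if k ≤ l.idxOf a ∧ l.idxOf a < l.idxOf b then l.idxOf a + 1 else l.idxOf a := by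
  have hne : l.idxOf b ≠ l.idxOf a := fun h => hab ((idxOf_inj hb).1 h).symm
  rw [idxOf_insertIdx_of_ne hab _ _ (le_length_erase_of_le_idxOf hb hk),
    idxOf_erase_of_ne hab]
  split_ifs <;> omega

theorem insertIdx_erase_perm (hb : b ∈ l) (hk : k ≤ l.idxOf b) :
    (l.erase b).insertIdx k b ~ l :=
  (perm_insertIdx b _ (le_length_erase_of_le_idxOf hb hk)).trans (perm_cons_erase hb).symm

end List

theorem isConnectedOrdering_iff_idxOf {V : Type*} [DecidableEq V] (G : SimpleGraph V) (l : List V) :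
    IsConnectedOrdering G l ↔
      IsOrdering l ∧ ∀ x, 0 < l.idxOf x → ∃ y, G.Adj y x ∧ l.idxOf y < l.idxOf x := by
  refine and_congr_right fun ⟨hnd, hall⟩ => ⟨fun h x hx => ?_, fun h i hi hpos => ?_⟩
  · obtain ⟨y, hy, hyx⟩ := h _ (List.idxOf_lt_length_iff.2 (hall x)) hx
    obtain ⟨j, hj, rfl⟩ := List.mem_take_iff_getElem.1 hy
    refine ⟨_, by simpa [List.getElem_idxOf] using hyx, ?_⟩
    rw [hnd.idxOf_getElem]
    omega
  · obtain ⟨y, hyx, hlt⟩ := h l[i] (by rwa [hnd.idxOf_getElem])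
    rw [hnd.idxOf_getElem] at hlt
    exact ⟨y, List.mem_take_iff_getElem.2 ⟨_, by omega, List.getElem_idxOf _⟩, hyx⟩

theorem stmt14 {V : Type*} [DecidableEq V] (G : SimpleGraph V) (S : List V)
    (hS : IsConnectedOrdering G S) (u v : V) (huv : G.Adj u v)
    (hpos : S.idxOf u < S.idxOf v)
    (hcond : S.idxOf u = 0 ∨ ∃ w, G.Adj v w ∧ S.idxOf w < S.idxOf u) :
    IsConnectedOrdering G ((S.erase v).insertIdx (S.idxOf u) v) := by
  rw [isConnectedOrdering_iff_idxOf] at hS ⊢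
  obtain ⟨⟨hnd, hall⟩, hconn⟩ := hS
  have hv := List.idxOf_insertIdx_erase_self hnd (hall v) hpos.le
  have hmove x (hx : x ≠ v) := List.idxOf_insertIdx_erase_of_ne hx (hall v) hpos.le
  have hperm := List.insertIdx_erase_perm (hall v) hpos.le
  refine ⟨⟨hperm.nodup_iff.2 hnd, fun x => hperm.mem_iff.2 (hall x)⟩, fun x hx => ?_⟩
  obtain rfl | hxv := eq_or_ne x v
  · obtain ⟨w, hxw, hw⟩ := hcond.resolve_left (by omega)
    have hwx : w ≠ x := by rintro rfl; omega
    exact ⟨w, hxw.symm, by rw [hmove w hwx, hv]; split_ifs <;> omega⟩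
  have hxv' : S.idxOf x ≠ S.idxOf v := fun h => hxv ((List.idxOf_inj (hall x)).1 h)
  rw [hmove x hxv] at hx ⊢
  rcases Nat.eq_zero_or_pos (S.idxOf x) with hx0 | hx0
  · have hxu : x = u := (List.idxOf_inj (hall x)).1 (by split_ifs at hx <;> omega)
    subst hxu
    exact ⟨v, huv.symm, by rw [hv]; split_ifs <;> omega⟩
  obtain ⟨y, hyx, hyx'⟩ := hconn x hx0
  obtain rfl | hyv := eq_or_ne y v
  · exact ⟨y, hyx, by rw [hv]; split_ifs <;> omega⟩
  · exact ⟨y, hyx, by rw [hmove y hyv]; split_ifs <;> omega⟩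
end

section
/- For any finite graph G, the Grundy number satisfies Γ(G) ≤ Δ₂(G) + 1, where Δ₂(G) = max over vertices u of the maximum degree among neighbors v of u with d(v) ≤ d(u). -/
open SimpleGraph

/-- `Δ₂(G)`: the maximum, over vertices `u`, of the largest degree among neighbors
`v` of `u` with `d(v) ≤ d(u)`. -/
noncomputable def delta2 {V : Type*} [Fintype V] [DecidableEq V] (G : SimpleGraph V)
    [DecidableRel G.Adj] : ℕ :=
  Finset.univ.sup fun u =>
    ((G.neighborFinset u).filter fun v => G.degree v ≤ G.degree u).sup fun v => G.degree v

lemma foldl_eq_of_notMem {V : Type*} [DecidableEq V] (G : SimpleGraph V)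
    (l : List V) (c : V → ℕ) (v : V) (hv : v ∉ l) :
    l.foldl (fun c v => Function.update c v
      (sInf {k | 0 < k ∧ ∀ u, G.Adj v u → c u ≠ k})) c v = c v := by
  induction l generalizing c with
  | nil => rfl
  | cons a t ih =>
    simp only [List.mem_cons, not_or] at hv
    rw [List.foldl_cons, ih _ hv.2, Function.update_of_ne hv.1]

lemma firstFit_eq_zero {V : Type*} [DecidableEq V] (G : SimpleGraph V)
    (l : List V) (v : V) (hv : v ∉ l) : firstFit G l v = 0 :=
  foldl_eq_of_notMem G l _ v hv

lemma firstFit_grundy {V : Type*} [Fintype V] [DecidableEq V] (G : SimpleGraph V)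
    (l : List V) (hl : l.Nodup) :
    ∀ v ∈ l, 0 < firstFit G l v ∧
      ∀ k, 0 < k → k < firstFit G l v → ∃ u, G.Adj v u ∧ firstFit G l u = k := by
  induction l using List.reverseRecOn with
  | nil => simp
  | append_singleton t w ih =>
    have hnd : t.Nodup := hl.of_append_left
    have hwt : w ∉ t := by
      have := List.disjoint_of_nodup_append hl
      simpa only [List.disjoint_singleton] using this
    have hfw : firstFit G t w = 0 := firstFit_eq_zero G t w hwt
    have hstep : ∀ x, firstFit G (t ++ [w]) x =
        Function.update (firstFit G t) w
          (sInf {k | 0 < k ∧ ∀ u, G.Adj w u → firstFit G t u ≠ k}) x := by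
      intro x
      simp [firstFit, List.foldl_append]
    intro v hv
    rcases List.mem_append.mp hv with hv | hv
    · have hne : v ≠ w := fun h => hwt (h ▸ hv)
      have heq : firstFit G (t ++ [w]) v = firstFit G t v := by
        rw [hstep, Function.update_of_ne hne]
      obtain ⟨hp, hg⟩ := ih hnd v hv
      refine ⟨heq ▸ hp, fun k hk hk' => ?_⟩
      obtain ⟨u, hu, hfu⟩ := hg k hk (heq ▸ hk')
      have hune : u ≠ w := fun h => by rw [h, hfw] at hfu; omega
      exact ⟨u, hu, by rw [hstep, Function.update_of_ne hune, hfu]⟩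
    · have hvw : v = w := by simpa using hv
      subst hvw
      set S : Set ℕ := {k | 0 < k ∧ ∀ u, G.Adj v u → firstFit G t u ≠ k} with hS
      have heq : firstFit G (t ++ [v]) v = sInf S := by
        rw [hstep, Function.update_self]
      have hSne : S.Nonempty := by
        refine ⟨Finset.univ.sup (firstFit G t) + 1, Nat.succ_pos _, fun u _ => ?_⟩
        have : firstFit G t u ≤ Finset.univ.sup (firstFit G t) :=
          Finset.le_sup (Finset.mem_univ u)
        omega
      have hmem := Nat.sInf_mem hSne
      refine ⟨heq ▸ hmem.1, fun k hk hk' => ?_⟩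
      have hknm : k ∉ S := Nat.notMem_of_lt_sInf (heq ▸ hk')
      simp only [hS, Set.mem_setOf_eq, not_and, not_forall] at hknm
      obtain ⟨u, hu, hfu⟩ := hknm hk
      rw [not_not] at hfu
      have hune : u ≠ v := fun h => by rw [h, hfw] at hfu; omega
      exact ⟨u, hu, by rw [hstep, Function.update_of_ne hune, hfu]⟩

lemma numColors_le_delta2 {V : Type*} [Fintype V] [DecidableEq V] (G : SimpleGraph V)
    [DecidableRel G.Adj] (l : List V) (hl : IsOrdering l) :
    numColors G l ≤ delta2 G + 1 := by
  apply Finset.sup_le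
  intro v _
  set c := firstFit G l v with hc
  by_cases hc2 : c ≤ 1
  · omega
  push_neg at hc2
  obtain ⟨-, hGv⟩ := firstFit_grundy G l hl.1 v (hl.2 v)
  obtain ⟨w, hadj, hfw⟩ := hGv (c - 1) (by omega) (by omega)
  obtain ⟨-, hGw⟩ := firstFit_grundy G l hl.1 w (hl.2 w)
  -- degree of v ≥ c - 1
  have hdv : c - 1 ≤ G.degree v := by
    have hsub : Finset.Icc 1 (c - 1) ⊆ (G.neighborFinset v).image (firstFit G l) := by
      intro k hk
      rw [Finset.mem_Icc] at hk
      obtain ⟨u, hu, hfu⟩ := hGv k (by omega) (by omega)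
      exact Finset.mem_image.mpr ⟨u, by rwa [mem_neighborFinset], hfu⟩
    calc c - 1 = (Finset.Icc 1 (c - 1)).card := by rw [Nat.card_Icc]; omega
      _ ≤ ((G.neighborFinset v).image (firstFit G l)).card := Finset.card_le_card hsub
      _ ≤ (G.neighborFinset v).card := Finset.card_image_le
      _ = G.degree v := (G.card_neighborFinset_eq_degree v).symm
  -- degree of w ≥ c - 1
  have hdw : c - 1 ≤ G.degree w := by
    have hsub : insert c (Finset.Icc 1 (c - 2)) ⊆ (G.neighborFinset w).image (firstFit G l) := by
      intro k hk
      rcases Finset.mem_insert.mp hk with hk | hk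
      · exact Finset.mem_image.mpr ⟨v, by rwa [mem_neighborFinset, adj_comm], (hk ▸ hc).symm⟩
      · rw [Finset.mem_Icc] at hk
        obtain ⟨u, hu, hfu⟩ := hGw k (by omega) (by rw [hfw]; omega)
        exact Finset.mem_image.mpr ⟨u, by rwa [mem_neighborFinset], hfu⟩
    have hcnm : c ∉ Finset.Icc 1 (c - 2) := by rw [Finset.mem_Icc]; omega
    calc c - 1 = (insert c (Finset.Icc 1 (c - 2))).card := by
          rw [Finset.card_insert_of_notMem hcnm, Nat.card_Icc]; omega
      _ ≤ ((G.neighborFinset w).image (firstFit G l)).card := Finset.card_le_card hsub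
      _ ≤ (G.neighborFinset w).card := Finset.card_image_le
      _ = G.degree w := (G.card_neighborFinset_eq_degree w).symm
  -- delta2 bound
  have hd2 : c - 1 ≤ delta2 G := by
    by_cases hcmp : G.degree w ≤ G.degree v
    · have hmem : w ∈ (G.neighborFinset v).filter fun x => G.degree x ≤ G.degree v := by
        rw [Finset.mem_filter, mem_neighborFinset]; exact ⟨hadj, hcmp⟩
      calc c - 1 ≤ G.degree w := hdw
        _ ≤ ((G.neighborFinset v).filter fun x => G.degree x ≤ G.degree v).sup
            (fun x => G.degree x) := Finset.le_sup (f := fun x => G.degree x) hmem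
        _ ≤ delta2 G := by
            unfold delta2
            exact Finset.le_sup (f := fun u => ((G.neighborFinset u).filter
                          fun x => G.degree x ≤ G.degree u).sup fun x => G.degree x) (Finset.mem_univ v)
    · have hmem : v ∈ (G.neighborFinset w).filter fun x => G.degree x ≤ G.degree w := by
        rw [Finset.mem_filter, mem_neighborFinset, adj_comm]
        exact ⟨hadj, by omega⟩
      calc c - 1 ≤ G.degree v := hdv
        _ ≤ ((G.neighborFinset w).filter fun x => G.degree x ≤ G.degree w).sup
            (fun x => G.degree x) := Finset.le_sup (f := fun x => G.degree x) hmem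
        _ ≤ delta2 G := by
            unfold delta2
            exact Finset.le_sup (f := fun u => ((G.neighborFinset u).filter
                          fun x => G.degree x ≤ G.degree u).sup fun x => G.degree x) (Finset.mem_univ w)
  omega

theorem stmt17 {V : Type*} [Fintype V] [DecidableEq V] (G : SimpleGraph V)
    [DecidableRel G.Adj] (he : ∃ u v : V, G.Adj u v) :
    grundy G ≤ delta2 G + 1 := by
  apply csSup_le
  · exact ⟨numColors G Finset.univ.toList,
      Finset.univ.toList, ⟨Finset.nodup_toList _, fun v => Finset.mem_toList.mpr (Finset.mem_univ v)⟩, rfl⟩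
  · rintro k ⟨l, hl, rfl⟩
    exact numColors_le_delta2 G l hl
end

section
/- For every finite connected graph G, the first-fit coloring along any connected ordering achieving the connected Grundy number is also a valid Grundy coloring, and hence Γ_c(G) ≤ Γ(G); moreover there exists a graph for which the inequality Γ_c(G) < Γ(G) is strict, namely the 6-vertex graph G with vertices {a,b,c,d,e,f} and edges {ab, bc, cd, de, ea, af, bf}, for which Γ(G) ≥ 4 while Γ_c(G) ≤ 3. -/
open SimpleGraph

/-- The 6-vertex graph on `{a,b,c,d,e,f} = {0,1,2,3,4,5}` with edges
`ab, bc, cd, de, ea, af, bf`. -/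
def G6 : SimpleGraph (Fin 6) :=
  SimpleGraph.fromRel fun x y =>
    (x = 0 ∧ y = 1) ∨ (x = 1 ∧ y = 2) ∨ (x = 2 ∧ y = 3) ∨ (x = 3 ∧ y = 4) ∨
      (x = 4 ∧ y = 0) ∨ (x = 0 ∧ y = 5) ∨ (x = 1 ∧ y = 5)

/-! ### Auxiliary machinery -/

/-- A least natural `k` available: pigeonhole. -/
lemma exists_avail {W : Type*} [Fintype W] [DecidableEq W] (c : W → ℕ) :
    ∃ k, 1 ≤ k ∧ k ≤ Fintype.card W + 1 ∧ ∀ u : W, c u ≠ k := by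
  classical
  have hF : (Finset.univ.image c).card ≤ Fintype.card W := by
    calc (Finset.univ.image c).card ≤ Finset.univ.card := Finset.card_image_le
    _ = Fintype.card W := Finset.card_univ
  have hns : ¬ (Finset.Icc 1 (Fintype.card W + 1) ⊆ Finset.univ.image c) := by
    intro hsub
    have := Finset.card_le_card hsub
    rw [Nat.card_Icc] at this
    omega
  obtain ⟨k, hk, hkF⟩ := Finset.not_subset.mp hns
  rw [Finset.mem_Icc] at hk
  refine ⟨k, hk.1, hk.2, fun u h => hkF ?_⟩
  exact Finset.mem_image.mpr ⟨u, Finset.mem_univ u, h⟩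

lemma sInf_le_bound {W : Type*} [Fintype W] [DecidableEq W] (G : SimpleGraph W)
    (c : W → ℕ) (v : W) :
    sInf {k | 0 < k ∧ ∀ u, G.Adj v u → c u ≠ k} ≤ Fintype.card W + 1 := by
  obtain ⟨k, hk1, hk2, hkc⟩ := exists_avail c
  exact le_trans (Nat.sInf_le ⟨hk1, fun u _ => hkc u⟩) hk2

lemma firstFit_le {W : Type*} [Fintype W] [DecidableEq W] (G : SimpleGraph W)
    (l : List W) (v : W) : firstFit G l v ≤ Fintype.card W + 1 := by
  rw [firstFit]
  have : ∀ (c : W → ℕ), (∀ w, c w ≤ Fintype.card W + 1) →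
      ∀ w, (l.foldl (fun c v => Function.update c v
        (sInf {k | 0 < k ∧ ∀ u, G.Adj v u → c u ≠ k})) c) w ≤ Fintype.card W + 1 := by
    induction l with
    | nil => intro c hc w; exact hc w
    | cons a l ih =>
      intro c hc w
      refine ih _ (fun w' => ?_) w
      show Function.update c a _ w' ≤ _
      rcases eq_or_ne w' a with rfl | hne
      · rw [Function.update_self]; exact sInf_le_bound G c w'
      · rw [Function.update_of_ne hne]; exact hc w'
  exact this _ (fun _ => by omega) v

lemma numColors_le {W : Type*} [Fintype W] [DecidableEq W] (G : SimpleGraph W)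
    (l : List W) : numColors G l ≤ Fintype.card W + 1 :=
  Finset.sup_le fun v _ => firstFit_le G l v

lemma grundy_bdd {W : Type*} [Fintype W] [DecidableEq W] (G : SimpleGraph W) :
    BddAbove {k | ∃ l : List W, IsOrdering l ∧ k = numColors G l} :=
  ⟨Fintype.card W + 1, fun k ⟨l, _, hk⟩ => hk ▸ numColors_le G l⟩

lemma conn_le_grundy {W : Type*} [Fintype W] [DecidableEq W] (G : SimpleGraph W) :
    connGrundy G ≤ grundy G := by
  refine csSup_le' ?_
  rintro k ⟨l, hl, hk⟩
  exact le_csSup (grundy_bdd G) ⟨l, hl.1, hk⟩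

/-! ### Concrete computations for `G6` -/

instance : DecidableRel G6.Adj := fun x y =>
  decidable_of_iff _ (SimpleGraph.fromRel_adj _ x y).symm

def edges6 : List (Fin 6 × Fin 6) := [(0,1),(1,2),(2,3),(3,4),(4,0),(0,5),(1,5)]

def nbr (x y : Fin 6) : Bool := edges6.contains (x,y) || edges6.contains (y,x)

lemma nbr_iff : ∀ x y : Fin 6, G6.Adj x y ↔ nbr x y = true := by decide

def leastAux : ℕ → ℕ → (ℕ → Bool) → ℕ
  | 0, k, _ => k
  | n+1, k, p => if p k then k else leastAux n (k+1) p

lemma leastAux_spec (p : ℕ → Bool) :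
    ∀ n k, (∃ j, k ≤ j ∧ j < k + n ∧ p j = true) →
      p (leastAux n k p) = true ∧ k ≤ leastAux n k p ∧
        ∀ j, k ≤ j → j < leastAux n k p → p j = false := by
  intro n
  induction n with
  | zero => rintro k ⟨j, h1, h2, _⟩; omega
  | succ n ih =>
    rintro k ⟨j, h1, h2, h3⟩
    by_cases hpk : p k = true
    · rw [leastAux, if_pos hpk]
      exact ⟨hpk, le_refl _, fun j hj1 hj2 => absurd hj2 (by omega)⟩
    · rw [leastAux, if_neg hpk]
      have hjk : j ≠ k := fun h => hpk (h ▸ h3)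
      obtain ⟨ha, hb, hc⟩ := ih (k+1) ⟨j, by omega, by omega, h3⟩
      refine ⟨ha, by omega, fun j' hj1 hj2 => ?_⟩
      rcases eq_or_lt_of_le hj1 with rfl | hlt
      · exact Bool.not_eq_true _ |>.mp hpk ▸ (by simpa using hpk)
      · exact hc j' hlt hj2

def step6 (c : Fin 6 → ℕ) (v : Fin 6) : ℕ :=
  leastAux 7 1 (fun k => (List.finRange 6).all fun u => !nbr v u || c u != k)

lemma sInf_eq' {P : ℕ → Prop} {n : ℕ} (h : P n) (h' : ∀ m < n, ¬ P m) :
    sInf {k | P k} = n := by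
  have h1 := Nat.sInf_mem (⟨n, h⟩ : {k | P k}.Nonempty)
  have h2 := Nat.sInf_le h
  rcases lt_or_eq_of_le h2 with hlt | heq
  · exact absurd h1 (h' _ hlt)
  · exact heq

lemma step6_eq (c : Fin 6 → ℕ) (v : Fin 6) :
    sInf {k | 0 < k ∧ ∀ u, G6.Adj v u → c u ≠ k} = step6 c v := by
  have hpIff : ∀ k, ((List.finRange 6).all fun u => !nbr v u || c u != k) = true ↔
      ∀ u, G6.Adj v u → c u ≠ k := by
    intro k
    simp only [List.all_eq_true, Bool.or_eq_true, Bool.not_eq_true', ne_eq, bne_iff_ne]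
    constructor
    · intro h u hadj
      rcases h u (List.mem_finRange u) with h' | h'
      · exact absurd ((nbr_iff v u).mp hadj) (by simp [h'])
      · exact h'
    · intro h u _
      by_cases hn : nbr v u = true
      · exact Or.inr (h u ((nbr_iff v u).mpr hn))
      · exact Or.inl (by simpa using hn)
  obtain ⟨m, hm1, hm2, hmc⟩ := exists_avail (W := Fin 6) c
  have hcard : Fintype.card (Fin 6) = 6 := by simp
  obtain ⟨ha, hb, hc⟩ := leastAux_spec
    (fun k => (List.finRange 6).all fun u => !nbr v u || c u != k) 7 1
    ⟨m, hm1, by omega, (hpIff m).mpr (fun u _ => hmc u)⟩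
  refine sInf_eq' ⟨hb, (hpIff _).mp ha⟩ ?_
  rintro m' hm' ⟨hpos, hall⟩
  have hfalse := hc m' (by omega) hm'
  rw [(hpIff m').mpr hall] at hfalse
  exact Bool.noConfusion hfalse

lemma firstFit_G6 (l : List (Fin 6)) :
    firstFit G6 l = l.foldl (fun c v => Function.update c v (step6 c v)) (fun _ => 0) := by
  rw [firstFit]
  congr 1
  funext c v
  rw [step6_eq]

lemma numColors_G6 (l : List (Fin 6)) :
    numColors G6 l =
      Finset.univ.sup (l.foldl (fun c v => Function.update c v (step6 c v)) (fun _ => 0)) := by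
  rw [numColors, firstFit_G6]


set_option maxRecDepth 10000 in
theorem stmt19 :
    (∀ (W : Type) [Fintype W] [DecidableEq W] (G : SimpleGraph W),
      connGrundy G ≤ grundy G) ∧
    4 ≤ grundy G6 ∧ connGrundy G6 ≤ 3 := by
  refine ⟨fun W _ _ G => conn_le_grundy G, ?_, ?_⟩
  · have h4 : numColors G6 [3,5,2,4,1,0] = 4 := by rw [numColors_G6]; decide
    have hord : IsOrdering ([3,5,2,4,1,0] : List (Fin 6)) := by constructor <;> decide
    have hmem : (4:ℕ) ∈ {k | ∃ l : List (Fin 6), IsOrdering l ∧ k = numColors G6 l} :=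
      ⟨[3,5,2,4,1,0], hord, h4.symm⟩
    exact le_csSup (grundy_bdd G6) hmem
  · refine csSup_le' ?_
    rintro k ⟨l, ⟨⟨hnd, hmem⟩, hconn⟩, rfl⟩
    have hperm : l ∈ (List.finRange 6).permutations' :=
      List.mem_permutations'.mpr
        ((List.perm_ext_iff_of_nodup hnd (List.nodup_finRange 6)).mpr
          (fun a => by simp [hmem a]))
    have key : ∀ l' ∈ (List.finRange 6).permutations',
        (∀ i (hi : i < l'.length), 0 < i →
          ∃ u ∈ l'.take i, nbr u (l'.get ⟨i, hi⟩) = true) →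
        Finset.univ.sup
          (l'.foldl (fun c v => Function.update c v (step6 c v)) (fun _ => 0)) ≤ 3 := by
      decide
    rw [numColors_G6]
    refine key l hperm ?_
    intro i hi hpos
    obtain ⟨u, hu, hadj⟩ := hconn i hi hpos
    exact ⟨u, hu, (nbr_iff _ _).mp hadj⟩
end
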